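/- Let L be the Laplacian matrix of a connected undirected simple graph on N vertices, and let H_1, ..., H_N be real matrices each with M columns such that the sum of H_n^T H_n over n is invertible. Then for any positive reals α, β, the matrix J = β(L ⊗ I_M) + α Σ_n E_n^T H_n^T H_n E_n (equivalently β(L ⊗ I_M) + α D_H^T D_H where D_H = blkdiag(H_1,...,H_N)) is positive definite. -/

import Mathlib

open scoped Kronecker
open Matrix Filter

/-- The set of eigenvalues of a matrix. -/
def eigSet {ι : Type*} [Fintype ι] (A : Matrix ι ι ℝ) : Set ℝ :=
  {t : ℝ | ∃ v : ι → ℝ, v ≠ 0 ∧ A.mulVec v = t • v}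

/-- Largest eigenvalue of a (symmetric) real matrix. -/
noncomputable def lmax {ι : Type*} [Fintype ι] (A : Matrix ι ι ℝ) : ℝ := sSup (eigSet A)

/-- Smallest eigenvalue of a (symmetric) real matrix. -/
noncomputable def lmin {ι : Type*} [Fintype ι] (A : Matrix ι ι ℝ) : ℝ := sInf (eigSet A)

/-- Second-smallest Laplacian eigenvalue (algebraic connectivity):
smallest eigenvalue on the subspace orthogonal to the all-ones vector. -/
noncomputable def lambda2 {N : ℕ} (L : Matrix (Fin N) (Fin N) ℝ) : ℝ :=
  sInf {t : ℝ | ∃ v : Fin N → ℝ, v ≠ 0 ∧ (∑ i, v i) = 0 ∧ L.mulVec v = t • v}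

/-- Block diagonal matrix with square blocks `A i`, i.e. `Σ_i E_iᵀ (A i) E_i`. -/
def blkOf {ι : Type*} [DecidableEq ι] {M : ℕ} (A : ι → Matrix (Fin M) (Fin M) ℝ) :
    Matrix (ι × Fin M) (ι × Fin M) ℝ :=
  Matrix.of fun p q => if p.1 = q.1 then A p.1 p.2 q.2 else 0

/-- Euclidean norm of a finitely supported real vector. -/
noncomputable def enorm {ι : Type*} [Fintype ι] (v : ι → ℝ) : ℝ :=
  Real.sqrt (∑ i, v i ^ 2)

/-!
Both summands are positive semidefinite, so it suffices that their kernels meet trivially.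
A vector killed by `L ⊗ I_M` is constant along the connected graph, `x = 𝟙 ⊗ v`. If it is also
killed by the block-diagonal term, then `H_nᵀ H_n v = 0` for every `n`, hence
`(∑ n, H_nᵀ H_n) v = 0`, and observability gives `v = 0`.
-/

open scoped ComplexOrder

namespace Matrix

theorem posDef_add_of_mulVec_eq_zero {𝕜 ι : Type*} [RCLike 𝕜] [Fintype ι] {A B : Matrix ι ι 𝕜}
    (hA : A.PosSemidef) (hB : B.PosSemidef) (h : ∀ x, A *ᵥ x = 0 → B *ᵥ x = 0 → x = 0) :
    (A + B).PosDef := by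
  refine posDef_iff_dotProduct_mulVec.mpr ⟨hA.isHermitian.add hB.isHermitian, fun x hx => ?_⟩
  have hAx := hA.dotProduct_mulVec_nonneg x
  have hBx := hB.dotProduct_mulVec_nonneg x
  rw [add_mulVec, dotProduct_add]
  refine (add_nonneg hAx hBx).lt_of_ne fun hsum => hx ?_
  obtain ⟨hAx₀, hBx₀⟩ := (add_eq_zero_iff_of_nonneg hAx hBx).mp hsum.symm
  exact h x ((hA.dotProduct_mulVec_zero_iff x).mp hAx₀) ((hB.dotProduct_mulVec_zero_iff x).mp hBx₀)

theorem kronecker_one_mulVec_apply {R ι κ : Type*} [Semiring R] [Fintype ι] [Fintype κ]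
    [DecidableEq κ] (A : Matrix ι ι R) (x : ι × κ → R) (i : ι) (k : κ) :
    ((A ⊗ₖ (1 : Matrix κ κ R)) *ᵥ x) (i, k) = (A *ᵥ fun j => x (j, k)) i := by
  simp [mulVec, dotProduct, Fintype.sum_prod_type, one_apply]

end Matrix

section blkOf

variable {ι : Type*} [Fintype ι] [DecidableEq ι] {M : ℕ}

theorem blkOf_mulVec_apply (A : ι → Matrix (Fin M) (Fin M) ℝ) (x : ι × Fin M → ℝ)
    (i : ι) (m : Fin M) : (blkOf A *ᵥ x) (i, m) = (A i *ᵥ fun k => x (i, k)) m := by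
  simp [mulVec, dotProduct, blkOf, Fintype.sum_prod_type]

theorem dotProduct_blkOf_mulVec (A : ι → Matrix (Fin M) (Fin M) ℝ) (x : ι × Fin M → ℝ) :
    x ⬝ᵥ blkOf A *ᵥ x = ∑ i, (fun k => x (i, k)) ⬝ᵥ A i *ᵥ fun k => x (i, k) := by
  simp only [dotProduct, Fintype.sum_prod_type, blkOf_mulVec_apply]

theorem posSemidef_blkOf {A : ι → Matrix (Fin M) (Fin M) ℝ} (hA : ∀ i, (A i).PosSemidef) :
    (blkOf A).PosSemidef := by
  refine posSemidef_iff_dotProduct_mulVec.mpr ⟨?_, fun x => ?_⟩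
  · ext ⟨i, m⟩ ⟨j, k⟩
    by_cases hij : i = j
    · subst hij
      simpa [blkOf] using congrFun (congrFun (hA i).isHermitian m) k
    · simp [blkOf, hij, Ne.symm hij]
  · rw [star_trivial, dotProduct_blkOf_mulVec]
    exact Finset.sum_nonneg fun i _ => by
      simpa using (hA i).dotProduct_mulVec_nonneg fun k => x (i, k)

theorem eq_zero_of_blkOf_mulVec_eq_zero {A : ι → Matrix (Fin M) (Fin M) ℝ}
    (hA : IsUnit (∑ i, A i)) {v : Fin M → ℝ} (h : blkOf A *ᵥ (fun p => v p.2) = 0) : v = 0 := by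
  have hAv : ∀ i, A i *ᵥ v = 0 := fun i => funext fun m => by
    simpa [blkOf_mulVec_apply] using congrFun h (i, m)
  refine mulVec_injective_iff_isUnit.mpr hA ?_
  rw [sum_mulVec, Finset.sum_eq_zero fun i _ => hAv i, mulVec_zero]

end blkOf

theorem SimpleGraph.Connected.exists_eq_of_lapMatrix_kronecker_one_mulVec_eq_zero
    {V κ : Type*} [Fintype V] [DecidableEq V] [Fintype κ] [DecidableEq κ]
    {G : SimpleGraph V} [DecidableRel G.Adj] (hG : G.Connected) {x : V × κ → ℝ}
    (h : (G.lapMatrix ℝ ⊗ₖ (1 : Matrix κ κ ℝ)) *ᵥ x = 0) : ∃ v : κ → ℝ, x = fun p => v p.2 := by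
  obtain ⟨i₀⟩ := hG.nonempty
  have hker : ∀ k, G.lapMatrix ℝ *ᵥ (fun j => x (j, k)) = 0 := fun k => funext fun i => by
    rw [← kronecker_one_mulVec_apply, h, Pi.zero_apply, Pi.zero_apply]
  refine ⟨fun k => x (i₀, k), funext fun ⟨i, k⟩ => ?_⟩
  exact (G.lapMatrix_mulVec_eq_zero_iff_forall_reachable.mp (hker k)) i i₀ (hG.preconnected i i₀)

theorem stmt0 {N M : ℕ} (G : SimpleGraph (Fin N)) [DecidableRel G.Adj]
    (hG : G.Connected)
    (P : Fin N → ℕ) (H : ∀ n, Matrix (Fin (P n)) (Fin M) ℝ)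
    (hObs : IsUnit (∑ n, (H n)ᵀ * H n))
    (α β : ℝ) (hα : 0 < α) (hβ : 0 < β) :
    (β • (G.lapMatrix ℝ ⊗ₖ (1 : Matrix (Fin M) (Fin M) ℝ)) +
      α • blkOf (fun n => (H n)ᵀ * H n)).PosDef := by
  have hHH : ∀ n, ((H n)ᵀ * H n).PosSemidef := fun n => by
    simpa using posSemidef_conjTranspose_mul_self (H n)
  refine posDef_add_of_mulVec_eq_zero
    (((G.posSemidef_lapMatrix ℝ).kronecker PosSemidef.one).smul hβ.le)
    ((posSemidef_blkOf hHH).smul hα.le) fun x hLx hDx => ?_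
  rw [smul_mulVec, smul_eq_zero, or_iff_right hβ.ne'] at hLx
  rw [smul_mulVec, smul_eq_zero, or_iff_right hα.ne'] at hDx
  obtain ⟨v, rfl⟩ := hG.exists_eq_of_lapMatrix_kronecker_one_mulVec_eq_zero hLx
  rw [eq_zero_of_blkOf_mulVec_eq_zero hObs hDx]
  rfl
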